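/- arXiv:1504.07920 — 2 statements merged into one kernel-verified Lean document; each statement's English description precedes it below -/
import Mathlib

section
/- For every z ∈ Z^a_0 there exists a pair (σ,y) ∈ T × Φ with y_0 = z such that y_σ ∈ X^a_σ and, for every t = 0,…,T−1, y_t ∈ Z^a_t \ X^a_t on the event {t < σ}. In particular, such a pair hedges the game option (Y,X,X') for the seller. -/
open Pointwise
open scoped MeasureTheory

noncomputable section

/-- Euclidean dot product on `Fin d → ℝ`. -/
def dotp {d : ℕ} (x y : Fin d → ℝ) : ℝ := ∑ i, x i * y i

/-- The `i`-th canonical basis vector of `ℝ^d`. -/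
def eVec {d : ℕ} (i : Fin d) : Fin d → ℝ := Pi.single i 1

/-- The solvency cone determined by a matrix of exchange rates: the convex cone
generated by the canonical basis vectors `e^i` and the vectors `π^{ij} e^i − e^j`. -/
def solvencyCone {d : ℕ} (π : Fin d → Fin d → ℝ) : Set (Fin d → ℝ) :=
  {x | ∃ a : Fin d → ℝ, ∃ b : Fin d → Fin d → ℝ,
    (∀ i, 0 ≤ a i) ∧ (∀ i j, 0 ≤ b i j) ∧
    x = (∑ i, a i • eVec i) + ∑ i, ∑ j, b i j • (π i j • eVec i - eVec j)}

/-- Positive polar of a set in `ℝ^d`. -/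
def posPolar {d : ℕ} (A : Set (Fin d → ℝ)) : Set (Fin d → ℝ) :=
  {x | ∀ y ∈ A, 0 ≤ dotp x y}

/-- A (closed) polyhedron: a finite intersection of closed half-spaces. -/
def IsPolyhedron {d : ℕ} (A : Set (Fin d → ℝ)) : Prop :=
  ∃ (n : ℕ) (a : Fin n → Fin d → ℝ) (b : Fin n → ℝ),
    A = {x | ∀ k, dotp (a k) x ≤ b k}

/-- A finite union of nonempty (closed) polyhedra. -/
def FinUnionPoly {d : ℕ} (A : Set (Fin d → ℝ)) : Prop :=
  ∃ (n : ℕ) (Q : Fin n → Set (Fin d → ℝ)),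
    (∀ k, IsPolyhedron (Q k) ∧ (Q k).Nonempty) ∧ A = ⋃ k, Q k

/-- The atom of the σ-algebra `m` containing `ω`. -/
def atomOf {Ω : Type*} (m : MeasurableSpace Ω) (ω : Ω) : Set Ω :=
  {ω' | ∀ A : Set Ω, MeasurableSet[m] A → ω ∈ A → ω' ∈ A}

variable {Ω : Type*}

/-- A stopping time with values in `0,…,T`. -/
def IsStoppingTime (F : ℕ → MeasurableSpace Ω) (T : ℕ) (τ : Ω → ℕ) : Prop :=
  (∀ ω, τ ω ≤ T) ∧ ∀ t, MeasurableSet[F t] {ω | τ ω ≤ t}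

/-- A randomised stopping time: an adapted nonnegative process with `Σ_{t=0}^T χ_t = 1`. -/
def IsRandomisedST [Fintype Ω] (F : ℕ → MeasurableSpace Ω) (T : ℕ) (χ : ℕ → Ω → ℝ) : Prop :=
  (∀ t, t ≤ T → Measurable[F t] (χ t)) ∧ (∀ t ω, t ≤ T → 0 ≤ χ t ω) ∧
  ∀ ω, ∑ t ∈ Finset.range (T + 1), χ t ω = 1

/-- `χ*_t = Σ_{s=t}^T χ_s`. -/
def chiStar (T : ℕ) (χ : ℕ → Ω → ℝ) (t : ℕ) (ω : Ω) : ℝ := ∑ s ∈ Finset.Icc t T, χ s ω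

/-- The truncated randomised stopping time `χ ∧ σ`,
`(χ∧σ)_t = χ_t 1_{t<σ} + χ*_t 1_{t=σ}`. -/
def trunc (T : ℕ) (χ : ℕ → Ω → ℝ) (σ : Ω → ℕ) (t : ℕ) (ω : Ω) : ℝ :=
  if t < σ ω then χ t ω else if t = σ ω then chiStar T χ t ω else 0

/-- The value `A_χ = Σ_{t=0}^T χ_t A_t` of an (adapted real) process at a randomised
stopping time. -/
def valAt (T : ℕ) (χ : ℕ → Ω → ℝ) (A : ℕ → Ω → ℝ) (ω : Ω) : ℝ :=
  ∑ t ∈ Finset.range (T + 1), χ t ω * A t ω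

/-- Expectation with respect to a probability `p` on a finite space. -/
def expect [Fintype Ω] (p : Ω → ℝ) (f : Ω → ℝ) : ℝ := ∑ ω, p ω * f ω

/-- The game option payoff
`Q_{st} = Y_t 1_{s>t} + X_s 1_{s<t} + X'_s 1_{s=t}`. -/
def payoffQ {d : ℕ} (Y X X' : ℕ → Ω → Fin d → ℝ) (s t : ℕ) (ω : Ω) : Fin d → ℝ :=
  if t < s then Y t ω else if s < t then X s ω else X' s ω

/-- The auxiliary payoff
`H_{st} = Y_t 1_{s>t} + X_s 1_{s=t<T} + X'_s 1_{s=t=T}`. -/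
def payoffH {d : ℕ} (T : ℕ) (Y X X' : ℕ → Ω → Fin d → ℝ) (s t : ℕ) (ω : Ω) : Fin d → ℝ :=
  if t < s then Y t ω
  else if s = t ∧ s < T then X s ω
  else if s = t ∧ s = T then X' s ω
  else 0

/-- `(Q_{σ·}·S_{σ∧·})_χ = Σ_{t=0}^{σ−1} χ_t Y_t·S_t + χ*_{σ+1} X_σ·S_σ + χ_σ X'_σ·S_σ`. -/
def sellerValue {d : ℕ} (T : ℕ) (Y X X' S : ℕ → Ω → Fin d → ℝ) (σ : Ω → ℕ)
    (χ : ℕ → Ω → ℝ) (ω : Ω) : ℝ :=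
  (∑ t ∈ Finset.range (σ ω), χ t ω * dotp (Y t ω) (S t ω))
    + chiStar T χ (σ ω + 1) ω * dotp (X (σ ω) ω) (S (σ ω) ω)
    + χ (σ ω) ω * dotp (X' (σ ω) ω) (S (σ ω) ω)

/-- `(Q_{·τ}·S_{·∧τ})_χ = Σ_{s=0}^{τ−1} χ_s X_s·S_s + χ*_{τ+1} Y_τ·S_τ + χ_τ X'_τ·S_τ`. -/
def buyerValue {d : ℕ} (T : ℕ) (Y X X' S : ℕ → Ω → Fin d → ℝ) (τ : Ω → ℕ)
    (χ : ℕ → Ω → ℝ) (ω : Ω) : ℝ :=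
  (∑ s ∈ Finset.range (τ ω), χ s ω * dotp (X s ω) (S s ω))
    + chiStar T χ (τ ω + 1) ω * dotp (Y (τ ω) ω) (S (τ ω) ω)
    + χ (τ ω) ω * dotp (X' (τ ω) ω) (S (τ ω) ω)

/-- The randomised stopping time `χ'_t = χ_t 1_{t<σ} + χ*_σ 1_{t=T}`. -/
def chiPrime (T : ℕ) (χ : ℕ → Ω → ℝ) (σ : Ω → ℕ) (t : ℕ) (ω : Ω) : ℝ :=
  if t < σ ω then χ t ω else if t = T then chiStar T χ (σ ω) ω else 0

/-- The Kabanov discrete-time currency model with proportional transaction costs on a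
finite probability space. -/
structure Market (Ω : Type*) [Fintype Ω] (d T : ℕ) where
  F : ℕ → MeasurableSpace Ω
  F_mono : ∀ s t : ℕ, s ≤ t → F s ≤ F t
  F_zero : F 0 = ⊥
  F_top : F T = ⊤
  P : Ω → ℝ
  P_pos : ∀ ω, 0 < P ω
  P_sum : ∑ ω, P ω = 1
  pi : ℕ → Fin d → Fin d → Ω → ℝ
  pi_pos : ∀ t, t ≤ T → ∀ i j ω, 0 < pi t i j ω
  pi_one : ∀ t, t ≤ T → ∀ i ω, pi t i i ω = 1
  pi_meas : ∀ t, t ≤ T → ∀ i j, Measurable[F t] (pi t i j)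

variable [Fintype Ω] {d T : ℕ}

/-- The solvency cone `K_t(ω)`. -/
def Market.cone (M : Market Ω d T) (t : ℕ) (ω : Ω) : Set (Fin d → ℝ) :=
  solvencyCone (fun i j => M.pi t i j ω)

/-- Self-financing (predictable) trading strategy. -/
def Market.SelfFinancing (M : Market Ω d T) (y : ℕ → Ω → Fin d → ℝ) : Prop :=
  Measurable[M.F 0] (y 0) ∧ (∀ t, t < T → Measurable[M.F t] (y (t + 1))) ∧
  ∀ t, t < T → ∀ ω, y t ω - y (t + 1) ω ∈ M.cone t ω

/-- Absence of arbitrage. -/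
def Market.NoArbitrage (M : Market Ω d T) : Prop :=
  ¬∃ y : ℕ → Ω → Fin d → ℝ, M.SelfFinancing y ∧ (∀ ω, y 0 ω = 0) ∧
    ∃ x : Ω → Fin d → ℝ, (∀ ω i, 0 ≤ x ω i) ∧ x ≠ 0 ∧ ∀ ω, y T ω - x ω ∈ M.cone T ω

/-- An equivalent martingale pair `(ℙ,S)` with `S_t ∈ K*_t \ {0}`. -/
def MartingalePair (M : Market Ω d T) (p : Ω → ℝ) (S : ℕ → Ω → Fin d → ℝ) : Prop :=
  (∀ ω, 0 < p ω) ∧ (∑ ω, p ω = 1) ∧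
  (∀ t, t ≤ T → Measurable[M.F t] (S t)) ∧
  (∀ t, t < T → ∀ A : Set Ω, MeasurableSet[M.F t] A →
    (∑ ω, A.indicator (fun ω' => p ω' • S (t + 1) ω') ω)
      = ∑ ω, A.indicator (fun ω' => p ω' • S t ω') ω) ∧
  ∀ t ω, t ≤ T → S t ω ∈ posPolar (M.cone t ω) ∧ S t ω ≠ 0

/-- A `χ`-approximate martingale pair `(ℙ,S)`. -/
def ApproxPair (M : Market Ω d T) (χ : ℕ → Ω → ℝ) (p : Ω → ℝ)
    (S : ℕ → Ω → Fin d → ℝ) : Prop :=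
  (∀ ω, 0 ≤ p ω) ∧ (∑ ω, p ω = 1) ∧
  (∀ t, t ≤ T → Measurable[M.F t] (S t)) ∧
  (∀ t ω, t ≤ T → S t ω ∈ posPolar (M.cone t ω) ∧ S t ω ≠ 0) ∧
  ∀ t ω, t ≤ T →
    (∑ ω', (atomOf (M.F t) ω).indicator
      (fun ω'' => p ω'' • ∑ s ∈ Finset.Icc (t + 1) T, χ s ω'' • S s ω'') ω')
      ∈ posPolar (M.cone t ω)

/-- A `χ`-approximate martingale pair with `S^i ≡ 1`: membership of `P̄^i(χ)`. -/
def ApproxPairI (M : Market Ω d T) (χ : ℕ → Ω → ℝ) (i : Fin d) (p : Ω → ℝ)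
    (S : ℕ → Ω → Fin d → ℝ) : Prop :=
  ApproxPair M χ p S ∧ ∀ t ω, t ≤ T → S t ω i = 1

/-- A `χ`-approximate equivalent martingale pair with `S^i ≡ 1`: membership of `P^i(χ)`. -/
def EquivApproxPairI (M : Market Ω d T) (χ : ℕ → Ω → ℝ) (i : Fin d) (p : Ω → ℝ)
    (S : ℕ → Ω → Fin d → ℝ) : Prop :=
  ApproxPairI M χ i p S ∧ ∀ ω, 0 < p ω

/-- A game option `(Y,X,X')`. -/
def IsGameOption (M : Market Ω d T) (Y X X' : ℕ → Ω → Fin d → ℝ) : Prop :=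
  (∀ t, t ≤ T → Measurable[M.F t] (Y t)) ∧ (∀ t, t ≤ T → Measurable[M.F t] (X t)) ∧
  (∀ t, t ≤ T → Measurable[M.F t] (X' t)) ∧
  ∀ t ω, t ≤ T → X t ω - X' t ω ∈ M.cone t ω ∧ X' t ω - Y t ω ∈ M.cone t ω

/-- `(σ,y)` hedges the game option `(Y,X,X')` for the seller:
`y_{σ∧τ} − Q_{στ} ∈ K_{σ∧τ}` for all stopping times `τ`. -/
def HedgesSeller (M : Market Ω d T) (Y X X' : ℕ → Ω → Fin d → ℝ) (σ : Ω → ℕ)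
    (y : ℕ → Ω → Fin d → ℝ) : Prop :=
  ∀ τ, IsStoppingTime M.F T τ → ∀ ω,
    y (min (σ ω) (τ ω)) ω - payoffQ Y X X' (σ ω) (τ ω) ω ∈ M.cone (min (σ ω) (τ ω)) ω

/-- `(τ,y)` hedges the game option `(Y,X,X')` for the buyer:
`y_{σ∧τ} + Q_{στ} ∈ K_{σ∧τ}` for all stopping times `σ`. -/
def HedgesBuyer (M : Market Ω d T) (Y X X' : ℕ → Ω → Fin d → ℝ) (τ : Ω → ℕ)
    (y : ℕ → Ω → Fin d → ℝ) : Prop :=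
  ∀ σ, IsStoppingTime M.F T σ → ∀ ω,
    y (min (σ ω) (τ ω)) ω + payoffQ Y X X' (σ ω) (τ ω) ω ∈ M.cone (min (σ ω) (τ ω)) ω

/-- The seller's sets `Z^a_t` (pointwise at each `ω`), by backward induction:
`Z^a_T = X'_T + K_T` and
`Z^a_t = ((Z^a_{t+1} ∩ L_t) + K_t) ∩ (Y_t + K_t) ∪ (X_t + K_t)` for `t < T`. -/
def Za (M : Market Ω d T) (Y X X' : ℕ → Ω → Fin d → ℝ) (t : ℕ) (ω : Ω) :
    Set (Fin d → ℝ) :=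
  if T ≤ t then {v | v - X' T ω ∈ M.cone T ω}
  else (({v : Fin d → ℝ | ∀ ω' ∈ atomOf (M.F t) ω, v ∈ Za M Y X X' (t + 1) ω'}
          + M.cone t ω)
        ∩ {v | v - Y t ω ∈ M.cone t ω})
      ∪ {v | v - X t ω ∈ M.cone t ω}
termination_by T - t
decreasing_by omega

/-- The seller's set `Y^a_t = Y_t + K_t` (pointwise). -/
def YaSet (M : Market Ω d T) (Y : ℕ → Ω → Fin d → ℝ) (t : ℕ) (ω : Ω) :
    Set (Fin d → ℝ) :=
  {v | v - Y t ω ∈ M.cone t ω}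

/-- The seller's set `X^a_t` (pointwise): `X_t + K_t` for `t < T`, `X'_T + K_T` at `T`. -/
def XaSet (M : Market Ω d T) (X X' : ℕ → Ω → Fin d → ℝ) (t : ℕ) (ω : Ω) :
    Set (Fin d → ℝ) :=
  if T ≤ t then {v | v - X' T ω ∈ M.cone T ω} else {v | v - X t ω ∈ M.cone t ω}

/-- The seller's set `W^a_t = Z^a_{t+1} ∩ L_t` (pointwise: intersection over the atom). -/
def WaSet (M : Market Ω d T) (Y X X' : ℕ → Ω → Fin d → ℝ) (t : ℕ) (ω : Ω) :
    Set (Fin d → ℝ) :=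
  if T ≤ t then Set.univ
  else {v | ∀ ω' ∈ atomOf (M.F t) ω, v ∈ Za M Y X X' (t + 1) ω'}

/-- The seller's set `V^a_t = W^a_t + K_t` (pointwise). -/
def VaSet (M : Market Ω d T) (Y X X' : ℕ → Ω → Fin d → ℝ) (t : ℕ) (ω : Ω) :
    Set (Fin d → ℝ) :=
  if T ≤ t then Set.univ else WaSet M Y X X' t ω + M.cone t ω

/-- The ask (seller's) price of the game option in currency `i`. -/
def askPrice (M : Market Ω d T) (Y X X' : ℕ → Ω → Fin d → ℝ) (i : Fin d) : ℝ :=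
  sInf {z : ℝ | ∃ σ y, IsStoppingTime M.F T σ ∧ M.SelfFinancing y ∧
    HedgesSeller M Y X X' σ y ∧ y 0 = fun _ => z • eVec i}

/-- The bid (buyer's) price of the game option in currency `i`. -/
def bidPrice (M : Market Ω d T) (Y X X' : ℕ → Ω → Fin d → ℝ) (i : Fin d) : ℝ :=
  sSup {w : ℝ | ∃ z : ℝ, ∃ τ y, IsStoppingTime M.F T τ ∧ M.SelfFinancing y ∧
    HedgesBuyer M Y X X' τ y ∧ y 0 = (fun _ => z • eVec i) ∧ w = -z}


section Aux

variable {Ω : Type*} [Fintype Ω] {d T : ℕ}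

lemma mem_atomOf_self (m : MeasurableSpace Ω) (ω : Ω) : ω ∈ atomOf m ω :=
  fun _ _ h => h

lemma atomOf_symm {m : MeasurableSpace Ω} {ω ω' : Ω} (h : ω' ∈ atomOf m ω) :
    ω ∈ atomOf m ω' := by
  intro A hA hω'
  by_contra hω
  exact (h Aᶜ hA.compl hω) hω'

lemma atomOf_eq_of_mem {m : MeasurableSpace Ω} {ω ω' : Ω} (h : ω' ∈ atomOf m ω) :
    atomOf m ω' = atomOf m ω := by
  ext ω''
  exact ⟨fun h'' A hA hω => h'' A hA (h A hA hω),
    fun h'' A hA hω' => h'' A hA (atomOf_symm h A hA hω')⟩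

lemma atomOf_mono {m m' : MeasurableSpace Ω} (hm : m ≤ m') {ω ω' : Ω}
    (h : ω' ∈ atomOf m' ω) : ω' ∈ atomOf m ω :=
  fun A hA hω => h A (hm A hA) hω

lemma atomOf_measurableSet (m : MeasurableSpace Ω) (ω : Ω) :
    MeasurableSet[m] (atomOf m ω) := by
  have : atomOf m ω = ⋂ A ∈ {A : Set Ω | MeasurableSet[m] A ∧ ω ∈ A}, A := by
    ext x
    simp only [atomOf, Set.mem_setOf_eq, Set.mem_iInter]
    tauto
  rw [this]
  exact MeasurableSet.biInter (Set.to_countable _) fun A hA => hA.1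

lemma measurableSet_of_atoms {m : MeasurableSpace Ω} {S : Set Ω}
    (h : ∀ ω ∈ S, atomOf m ω ⊆ S) : MeasurableSet[m] S := by
  have : S = ⋃ ω ∈ S, atomOf m ω := by
    ext x
    constructor
    · intro hx; exact Set.mem_biUnion hx (mem_atomOf_self m x)
    · intro hx
      simp only [Set.mem_iUnion] at hx
      obtain ⟨ω, hω, hx⟩ := hx
      exact h ω hω hx
  rw [this]
  exact MeasurableSet.biUnion (Set.to_countable _) fun ω _ => atomOf_measurableSet m ω

lemma measurable_of_atoms {β : Type*} [MeasurableSpace β] {m : MeasurableSpace Ω}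
    {f : Ω → β} (h : ∀ ω ω', ω' ∈ atomOf m ω → f ω' = f ω) : Measurable[m] f := by
  intro A hA
  apply measurableSet_of_atoms
  intro ω hω ω' hω'
  simpa [Set.mem_preimage, h ω ω' hω'] using hω

lemma eq_on_atom {β : Type*} [MeasurableSpace β] [MeasurableSingletonClass β]
    {m : MeasurableSpace Ω} {f : Ω → β} (hf : Measurable[m] f) {ω ω' : Ω}
    (h : ω' ∈ atomOf m ω) : f ω' = f ω :=
  h (f ⁻¹' {f ω}) (hf (measurableSet_singleton _)) rfl

lemma solvencyCone_zero_mem (π : Fin d → Fin d → ℝ) : (0 : Fin d → ℝ) ∈ solvencyCone π :=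
  ⟨0, 0, fun _ => le_refl 0, fun _ _ => le_refl 0, by simp⟩

lemma solvencyCone_add {π : Fin d → Fin d → ℝ} {x y : Fin d → ℝ}
    (hx : x ∈ solvencyCone π) (hy : y ∈ solvencyCone π) : x + y ∈ solvencyCone π := by
  obtain ⟨a, b, ha, hb, hx⟩ := hx
  obtain ⟨a', b', ha', hb', hy⟩ := hy
  refine ⟨a + a', b + b', fun i => add_nonneg (ha i) (ha' i),
    fun i j => add_nonneg (hb i j) (hb' i j), ?_⟩
  subst hx hy
  simp only [Pi.add_apply, add_smul, Finset.sum_add_distrib]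
  abel

lemma cone_eq_of_atom (M : Market Ω d T) {t : ℕ} (ht : t ≤ T) {ω ω' : Ω}
    (h : ω' ∈ atomOf (M.F t) ω) : M.cone t ω' = M.cone t ω := by
  unfold Market.cone
  have : (fun i j => M.pi t i j ω') = fun i j => M.pi t i j ω := by
    funext i j
    exact eq_on_atom (M.pi_meas t ht i j) h
  rw [this]

lemma XaSet_eq_of_atom (M : Market Ω d T) {X X' : ℕ → Ω → Fin d → ℝ}
    (hX : ∀ t, t ≤ T → Measurable[M.F t] (X t)) (hX' : ∀ t, t ≤ T → Measurable[M.F t] (X' t))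
    {t : ℕ} (ht : t ≤ T) {ω ω' : Ω} (h : ω' ∈ atomOf (M.F t) ω) :
    XaSet M X X' t ω' = XaSet M X X' t ω := by
  unfold XaSet
  by_cases hT : T ≤ t
  · have htT : t = T := le_antisymm ht hT
    subst htT
    rw [if_pos hT, if_pos hT, eq_on_atom (hX' t le_rfl) h, cone_eq_of_atom M le_rfl h]
  · rw [if_neg hT, if_neg hT, eq_on_atom (hX t ht) h, cone_eq_of_atom M ht h]

lemma Za_eq_of_atom (M : Market Ω d T) {Y X X' : ℕ → Ω → Fin d → ℝ}
    (hY : ∀ t, t ≤ T → Measurable[M.F t] (Y t))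
    (hX : ∀ t, t ≤ T → Measurable[M.F t] (X t)) (hX' : ∀ t, t ≤ T → Measurable[M.F t] (X' t))
    {t : ℕ} (ht : t ≤ T) {ω ω' : Ω} (h : ω' ∈ atomOf (M.F t) ω) :
    Za M Y X X' t ω' = Za M Y X X' t ω := by
  rw [Za, Za]
  by_cases hT : T ≤ t
  · have htT : t = T := le_antisymm ht hT
    subst htT
    rw [if_pos hT, if_pos hT, eq_on_atom (hX' t le_rfl) h, cone_eq_of_atom M le_rfl h]
  · have ht' : t < T := lt_of_not_ge hT
    rw [if_neg hT, if_neg hT, eq_on_atom (hY t ht) h, eq_on_atom (hX t ht) h,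
      cone_eq_of_atom M ht h, atomOf_eq_of_mem h]

end Aux

section Construction

variable {Ω : Type*} [Fintype Ω] {d T : ℕ}

lemma cone_zero (M : Market Ω d T) (t : ℕ) (ω : Ω) : (0 : Fin d → ℝ) ∈ M.cone t ω :=
  solvencyCone_zero_mem _

lemma cone_add (M : Market Ω d T) {t : ℕ} {ω : Ω} {x y : Fin d → ℝ}
    (hx : x ∈ M.cone t ω) (hy : y ∈ M.cone t ω) : x + y ∈ M.cone t ω :=
  solvencyCone_add hx hy

open Classical in
noncomputable def pickW (M : Market Ω d T) (Y X X' : ℕ → Ω → Fin d → ℝ) (t : ℕ)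
    (A : Set Ω) (K : Set (Fin d → ℝ)) (v : Fin d → ℝ) : Fin d → ℝ :=
  if h : ∃ w, (∀ ω' ∈ A, w ∈ Za M Y X X' (t + 1) ω') ∧ v - w ∈ K then h.choose else v

open Classical in
noncomputable def hedgeY (M : Market Ω d T) (Y X X' : ℕ → Ω → Fin d → ℝ)
    (f : Ω → Fin d → ℝ) : ℕ → Ω → Fin d → ℝ
  | 0 => f
  | t + 1 => fun ω =>
      if hedgeY M Y X X' f t ω ∈ XaSet M X X' t ω then hedgeY M Y X X' f t ω
      else pickW M Y X X' t (atomOf (M.F t) ω) (M.cone t ω) (hedgeY M Y X X' f t ω)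

lemma hedgeY_step (M : Market Ω d T) (Y X X' : ℕ → Ω → Fin d → ℝ) (f : Ω → Fin d → ℝ)
    (t : ℕ) (ω : Ω) :
    hedgeY M Y X X' f t ω - hedgeY M Y X X' f (t + 1) ω ∈ M.cone t ω := by
  simp only [hedgeY]
  split
  · simpa using cone_zero M t ω
  · simp only [pickW]
    split
    · next h => exact h.choose_spec.2
    · simpa using cone_zero M t ω

lemma hedgeY_mem_succ (M : Market Ω d T) (Y X X' : ℕ → Ω → Fin d → ℝ) (f : Ω → Fin d → ℝ)
    {t : ℕ} (ht : t < T) {ω : Ω}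
    (hZ : hedgeY M Y X X' f t ω ∈ Za M Y X X' t ω)
    (hnX : hedgeY M Y X X' f t ω ∉ XaSet M X X' t ω) :
    ∀ ω' ∈ atomOf (M.F t) ω, hedgeY M Y X X' f (t + 1) ω ∈ Za M Y X X' (t + 1) ω' := by
  rw [Za, if_neg (not_le.mpr ht)] at hZ
  have hnX' : hedgeY M Y X X' f t ω ∉ {v | v - X t ω ∈ M.cone t ω} := by
    simpa [XaSet, if_neg (not_le.mpr ht)] using hnX
  rcases hZ with hZ | hZ
  swap
  · exact absurd hZ hnX'
  obtain ⟨hV, -⟩ := hZ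
  rw [Set.mem_add] at hV
  obtain ⟨w, hw, k, hk, hwk⟩ := hV
  have hex : ∃ w', (∀ ω' ∈ atomOf (M.F t) ω, w' ∈ Za M Y X X' (t + 1) ω') ∧
      hedgeY M Y X X' f t ω - w' ∈ M.cone t ω := by
    refine ⟨w, hw, ?_⟩
    rw [← hwk]
    simpa using hk
  intro ω' hω'
  simp only [hedgeY]
  rw [if_neg hnX]
  simp only [pickW]
  rw [dif_pos hex]
  exact hex.choose_spec.1 ω' hω'

lemma hedgeY_succ_const (M : Market Ω d T) {Y X X' : ℕ → Ω → Fin d → ℝ}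
    (hXm : ∀ t, t ≤ T → Measurable[M.F t] (X t))
    (hX'm : ∀ t, t ≤ T → Measurable[M.F t] (X' t)) (f : Ω → Fin d → ℝ)
    {t : ℕ} (ht : t < T) {ω ω' : Ω} (h : ω' ∈ atomOf (M.F t) ω)
    (hc : hedgeY M Y X X' f t ω' = hedgeY M Y X X' f t ω) :
    hedgeY M Y X X' f (t + 1) ω' = hedgeY M Y X X' f (t + 1) ω := by
  simp only [hedgeY]
  rw [hc, XaSet_eq_of_atom M hXm hX'm (le_of_lt ht) h, atomOf_eq_of_mem h,
    cone_eq_of_atom M (le_of_lt ht) h]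

lemma hedgeY_const (M : Market Ω d T) {Y X X' : ℕ → Ω → Fin d → ℝ}
    (hXm : ∀ t, t ≤ T → Measurable[M.F t] (X t))
    (hX'm : ∀ t, t ≤ T → Measurable[M.F t] (X' t)) {f : Ω → Fin d → ℝ}
    (hf : Measurable[M.F 0] f) :
    ∀ t, t ≤ T → ∀ ω ω', ω' ∈ atomOf (M.F t) ω →
      hedgeY M Y X X' f t ω' = hedgeY M Y X X' f t ω := by
  intro t
  induction t with
  | zero => intro _ ω ω' h; exact eq_on_atom hf h
  | succ t ih =>
    intro ht ω ω' h
    have h' : ω' ∈ atomOf (M.F t) ω := atomOf_mono (M.F_mono t (t + 1) (by omega)) h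
    exact hedgeY_succ_const M hXm hX'm f (by omega) h' (ih (by omega) ω ω' h')

end Construction


/-- For every initial endowment `z ∈ Z^a_0` there is a pair `(σ,y)` with `y_0 = z` such
that `y_σ ∈ X^a_σ` and `y_t ∈ Z^a_t \ X^a_t` on `{t < σ}` for every `t = 0,…,T−1`;
in particular `(σ,y)` hedges the game option `(Y,X,X')` for the seller. -/
theorem exists_hedge_of_mem_Za {Ω : Type*} [Fintype Ω] {d T : ℕ}
    (M : Market Ω d T) (Y X X' : ℕ → Ω → Fin d → ℝ) (hGO : IsGameOption M Y X X')
    (f : Ω → Fin d → ℝ) (hf_meas : Measurable[M.F 0] f)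
    (hf_mem : ∀ ω, f ω ∈ Za M Y X X' 0 ω) :
    ∃ σ y, IsStoppingTime M.F T σ ∧ M.SelfFinancing y ∧ y 0 = f ∧
      (∀ ω, y (σ ω) ω ∈ XaSet M X X' (σ ω) ω) ∧
      (∀ t ω, t < T → t < σ ω →
        y t ω ∈ Za M Y X X' t ω ∧ y t ω ∉ XaSet M X X' t ω) ∧
      HedgesSeller M Y X X' σ y := by
  classical
  obtain ⟨hYm, hXm, hX'm, hKc⟩ := hGO
  have hZaT : ∀ ω, Za M Y X X' T ω = XaSet M X X' T ω := by
    intro ω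
    rw [Za, XaSet]
    simp
  have hinv : ∀ t, t ≤ T → ∀ ω,
      (∀ s, s < t → hedgeY M Y X X' f s ω ∉ XaSet M X X' s ω) →
      hedgeY M Y X X' f t ω ∈ Za M Y X X' t ω := by
    intro t
    induction t with
    | zero => intro _ ω _; exact hf_mem ω
    | succ t ih =>
      intro ht ω hns
      have htT : t < T := by omega
      have hZ : hedgeY M Y X X' f t ω ∈ Za M Y X X' t ω :=
        ih (by omega) ω fun s hs => hns s (by omega)
      exact hedgeY_mem_succ M Y X X' f htT hZ (hns t (by omega)) ω (mem_atomOf_self _ _)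
  have hex : ∀ ω, ∃ t, hedgeY M Y X X' f t ω ∈ XaSet M X X' t ω := by
    intro ω
    by_cases h : ∃ s, s < T ∧ hedgeY M Y X X' f s ω ∈ XaSet M X X' s ω
    · obtain ⟨s, -, hs⟩ := h
      exact ⟨s, hs⟩
    · push_neg at h
      refine ⟨T, ?_⟩
      rw [← hZaT]
      exact hinv T le_rfl ω h
  have hnot : ∀ t ω, t < Nat.find (hex ω) → hedgeY M Y X X' f t ω ∉ XaSet M X X' t ω :=
    fun t ω h => Nat.find_min (hex ω) h
  have hσle : ∀ ω, Nat.find (hex ω) ≤ T := by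
    intro ω
    by_contra h
    push_neg at h
    have hT : hedgeY M Y X X' f T ω ∈ Za M Y X X' T ω :=
      hinv T le_rfl ω fun s hs => hnot s ω (by omega)
    rw [hZaT] at hT
    exact hnot T ω h hT
  have hσspec : ∀ ω, hedgeY M Y X X' f (Nat.find (hex ω)) ω
      ∈ XaSet M X X' (Nat.find (hex ω)) ω := fun ω => Nat.find_spec (hex ω)
  have hmemZa : ∀ t ω, t < Nat.find (hex ω) → hedgeY M Y X X' f t ω ∈ Za M Y X X' t ω :=
    fun t ω h => hinv t (le_trans (le_of_lt h) (hσle ω)) ω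
      fun s hs => hnot s ω (lt_trans hs h)
  refine ⟨fun ω => Nat.find (hex ω), hedgeY M Y X X' f, ?_, ?_, rfl, ?_, ?_, ?_⟩
  · -- stopping time
    refine ⟨hσle, fun t => ?_⟩
    by_cases htT : T ≤ t
    · have : {ω | Nat.find (hex ω) ≤ t} = Set.univ :=
        Set.eq_univ_of_forall fun ω => (hσle ω).trans htT
      rw [this]
      exact MeasurableSet.univ
    · apply measurableSet_of_atoms
      intro ω hω ω' hω'
      simp only [Set.mem_setOf_eq] at hω ⊢
      have hsT : Nat.find (hex ω) ≤ t := hω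
      have hsT' : Nat.find (hex ω) ≤ T := hσle ω
      have h1 : ω' ∈ atomOf (M.F (Nat.find (hex ω))) ω :=
        atomOf_mono (M.F_mono _ t hsT) hω'
      have h2 : hedgeY M Y X X' f (Nat.find (hex ω)) ω'
          = hedgeY M Y X X' f (Nat.find (hex ω)) ω :=
        hedgeY_const M hXm hX'm hf_meas _ hsT' ω ω' h1
      have h3 : hedgeY M Y X X' f (Nat.find (hex ω)) ω'
          ∈ XaSet M X X' (Nat.find (hex ω)) ω' := by
        rw [h2, XaSet_eq_of_atom M hXm hX'm hsT' h1]
        exact hσspec ω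
      exact le_trans (Nat.find_min' (hex ω') h3) hsT
  · -- self-financing
    refine ⟨hf_meas, fun t ht => ?_, fun t ht ω => hedgeY_step M Y X X' f t ω⟩
    exact measurable_of_atoms fun ω ω' h =>
      hedgeY_succ_const M hXm hX'm f ht h (hedgeY_const M hXm hX'm hf_meas t (le_of_lt ht) ω ω' h)
  · exact hσspec
  · exact fun t ω _ h2 => ⟨hmemZa t ω h2, hnot t ω h2⟩
  · -- hedges the seller
    intro τ hτ ω
    simp only []
    rcases lt_trichotomy (τ ω) (Nat.find (hex ω)) with hlt | heq | hgt
    · have hmin : min (Nat.find (hex ω)) (τ ω) = τ ω := min_eq_right (le_of_lt hlt)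
      have hτT : τ ω < T := lt_of_lt_of_le hlt (hσle ω)
      rw [hmin, payoffQ, if_pos hlt]
      have hZ := hmemZa (τ ω) ω hlt
      rw [Za, if_neg (not_le.mpr hτT)] at hZ
      rcases hZ with hZ | hZ
      · exact hZ.2
      · exact absurd (by simpa [XaSet, if_neg (not_le.mpr hτT)] using hZ) (hnot (τ ω) ω hlt)
    · have hmin : min (Nat.find (hex ω)) (τ ω) = Nat.find (hex ω) := by
        rw [heq, min_self]
      rw [hmin, payoffQ, if_neg (by omega), if_neg (by omega)]
      have hs := hσspec ω
      by_cases hT : T ≤ Nat.find (hex ω)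
      · rw [XaSet, if_pos hT] at hs
        have hTeq : Nat.find (hex ω) = T := le_antisymm (hσle ω) hT
        rw [hTeq] at hs ⊢
        exact hs
      · rw [XaSet, if_neg hT] at hs
        have h2 := (hKc (Nat.find (hex ω)) ω (hσle ω)).1
        have := cone_add M hs h2
        rwa [sub_add_sub_cancel] at this
    · have hmin : min (Nat.find (hex ω)) (τ ω) = Nat.find (hex ω) :=
        min_eq_left (le_of_lt hgt)
      have hσT : Nat.find (hex ω) < T := lt_of_lt_of_le hgt (hτ.1 ω)
      rw [hmin, payoffQ, if_neg (by omega), if_pos hgt]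
      have hs := hσspec ω
      rwa [XaSet, if_neg (not_le.mpr hσT)] at hs
end
end

section
/- For every t = 0,…,T and every atom μ of F_t, the sets Z^{aμ}_t, V^{aμ}_t and W^{aμ}_t ⊆ ℝ^d produced by the seller's backward construction are finite unions of nonempty closed polyhedra, and in particular are closed subsets of ℝ^d. -/
open Pointwise
open scoped MeasureTheory

noncomputable section

variable {Ω : Type*}

variable [Fintype Ω] {d T : ℕ}

lemma dotp_sub_smul {d : ℕ} (a x v : Fin d → ℝ) (t : ℝ) :
    dotp a (x - t • v) = dotp a x - t * dotp a v := by
  simp only [dotp, Finset.mul_sum, ← Finset.sum_sub_distrib]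
  exact Finset.sum_congr rfl fun i _ => by simp; ring

lemma dotp_comb {d : ℕ} (u w x : Fin d → ℝ) (c c' : ℝ) :
    dotp (c • u - c' • w) x = c * dotp u x - c' * dotp w x := by
  simp only [dotp, Finset.mul_sum, ← Finset.sum_sub_distrib]
  exact Finset.sum_congr rfl fun i _ => by simp [Pi.sub_apply]; ring

lemma dotp_zero {d : ℕ} (x : Fin d → ℝ) : dotp 0 x = 0 := by simp [dotp]

lemma dotp_eVec {d : ℕ} (i : Fin d) (x : Fin d → ℝ) : dotp (eVec i) x = x i := by
  simp [dotp, eVec, Pi.single_apply, Finset.sum_ite_eq]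

lemma dotp_neg {d : ℕ} (a x : Fin d → ℝ) : dotp (-a) x = - dotp a x := by
  simp [dotp]

lemma continuous_dotp {d : ℕ} (a : Fin d → ℝ) : Continuous (dotp a) := by
  unfold dotp
  exact continuous_finset_sum _ fun i _ => (continuous_const.mul (continuous_apply i))

lemma isPolyhedron_fintype {d : ℕ} {ι : Type*} [Fintype ι] (a : ι → Fin d → ℝ) (b : ι → ℝ) :
    IsPolyhedron {x : Fin d → ℝ | ∀ k, dotp (a k) x ≤ b k} := by
  let e := Fintype.equivFin ι
  refine ⟨Fintype.card ι, a ∘ e.symm, b ∘ e.symm, ?_⟩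
  ext x
  constructor
  · intro h k; exact h _
  · intro h k; simpa using h (e k)

lemma isPolyhedron_univ {d : ℕ} : IsPolyhedron (Set.univ : Set (Fin d → ℝ)) := by
  refine ⟨0, Fin.elim0, Fin.elim0, ?_⟩
  ext x; simp

lemma IsPolyhedron.isClosed {d : ℕ} {A : Set (Fin d → ℝ)} (h : IsPolyhedron A) :
    IsClosed A := by
  obtain ⟨n, a, b, rfl⟩ := h
  have : {x : Fin d → ℝ | ∀ k, dotp (a k) x ≤ b k} = ⋂ k, {x | dotp (a k) x ≤ b k} := by
    ext x; simp
  rw [this]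
  exact isClosed_iInter fun k => isClosed_le (continuous_dotp _) continuous_const

lemma isPolyhedron_iInter {d : ℕ} {ι : Type*} [Fintype ι] {A : ι → Set (Fin d → ℝ)}
    (h : ∀ i, IsPolyhedron (A i)) : IsPolyhedron (⋂ i, A i) := by
  choose n a b hA using h
  have : (⋂ i, A i) = {x : Fin d → ℝ | ∀ k : Σ i, Fin (n i), dotp (a k.1 k.2) x ≤ b k.1 k.2} := by
    ext x
    simp only [Set.mem_iInter, Set.mem_setOf_eq, Sigma.forall]
    constructor
    · intro hx i k; have := hx i; rw [hA i] at this; exact this k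
    · intro hx i; rw [hA i]; exact fun k => hx i k
  rw [this]
  exact isPolyhedron_fintype _ _

lemma isPolyhedron_singleton {d : ℕ} (x : Fin d → ℝ) :
    IsPolyhedron ({x} : Set (Fin d → ℝ)) := by
  have : ({x} : Set (Fin d → ℝ)) =
      {y | ∀ k : Fin d ⊕ Fin d, dotp (Sum.elim (fun i => eVec i) (fun i => -eVec i) k) y ≤
        Sum.elim (fun i => x i) (fun i => -(x i)) k} := by
    ext y
    simp only [Set.mem_singleton_iff, Set.mem_setOf_eq, Sum.forall, Sum.elim_inl, Sum.elim_inr,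
      dotp_eVec, dotp_neg]
    constructor
    · rintro rfl; exact ⟨fun i => le_refl _, fun i => le_refl _⟩
    · rintro ⟨h1, h2⟩
      funext i
      have := h2 i
      have h2' : x i ≤ y i := by linarith
      exact le_antisymm (h1 i) h2'
  rw [this]
  exact isPolyhedron_fintype _ _

open Pointwise

lemma isPoly_add_ray {d : ℕ} {P : Set (Fin d → ℝ)} (h : IsPolyhedron P) (v : Fin d → ℝ) :
    IsPolyhedron (P + {x : Fin d → ℝ | ∃ t : ℝ, 0 ≤ t ∧ x = t • v}) := by
  classical
  obtain ⟨n, a, b, rfl⟩ := h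
  set c : Fin n → ℝ := fun k => dotp (a k) v with hc
  -- first rewrite the sum set
  have hsum : ({x : Fin d → ℝ | ∀ k, dotp (a k) x ≤ b k} +
      {x : Fin d → ℝ | ∃ t : ℝ, 0 ≤ t ∧ x = t • v}) =
      {x : Fin d → ℝ | ∃ t : ℝ, 0 ≤ t ∧ ∀ k, dotp (a k) x - t * c k ≤ b k} := by
    ext x
    constructor
    · rintro ⟨p, hp, q, ⟨t, ht, rfl⟩, rfl⟩
      refine ⟨t, ht, fun k => ?_⟩
      have : p + t • v - t • v = p := by abel
      have h2 : dotp (a k) (p + t • v - t • v) = dotp (a k) (p + t • v) - t * c k :=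
        dotp_sub_smul _ _ _ _
      rw [this] at h2
      rw [← h2]; exact hp k
    · rintro ⟨t, ht, hx⟩
      refine ⟨x - t • v, fun k => ?_, t • v, ⟨t, ht, rfl⟩, sub_add_cancel x (t • v)⟩
      rw [dotp_sub_smul]; exact hx k
  rw [hsum]
  set A' : (Fin n ⊕ Fin n × Fin n) → (Fin d → ℝ) := fun k =>
    match k with
    | Sum.inl k => if 0 < c k then 0 else a k
    | Sum.inr (j, k) => if 0 < c j ∧ c k < 0 then c j • a k - c k • a j else 0
  set B' : (Fin n ⊕ Fin n × Fin n) → ℝ := fun k =>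
    match k with
    | Sum.inl k => if 0 < c k then 0 else b k
    | Sum.inr (j, k) => if 0 < c j ∧ c k < 0 then c j * b k - c k * b j else 0
  have key : {x : Fin d → ℝ | ∃ t : ℝ, 0 ≤ t ∧ ∀ k, dotp (a k) x - t * c k ≤ b k} =
      {x | ∀ k, dotp (A' k) x ≤ B' k} := by
    ext x
    simp only [Set.mem_setOf_eq]
    constructor
    · rintro ⟨t, ht, hx⟩
      rintro (k | ⟨j, k⟩)
      · show dotp (if 0 < c k then 0 else a k) x ≤ if 0 < c k then 0 else b k
        split_ifs with hck
        · simp [dotp_zero]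
        · push_neg at hck
          have h1 := hx k
          nlinarith
      · show dotp (if 0 < c j ∧ c k < 0 then c j • a k - c k • a j else 0) x ≤
          if 0 < c j ∧ c k < 0 then c j * b k - c k * b j else 0
        split_ifs with hjk
        · obtain ⟨hcj, hck⟩ := hjk
          rw [dotp_comb]
          have h1 := hx j
          have h2 := hx k
          nlinarith
        · simp [dotp_zero]
    · intro hx
      -- candidate t
      set S : Finset ℝ := insert (0:ℝ)
        ((Finset.univ.filter (fun j => 0 < c j)).image (fun j => (dotp (a j) x - b j) / c j))
        with hS
      have hSne : S.Nonempty := ⟨0, Finset.mem_insert_self _ _⟩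
      set t : ℝ := S.max' hSne with htdef
      have ht0 : (0:ℝ) ≤ t := Finset.le_max' S 0 (Finset.mem_insert_self _ _)
      refine ⟨t, ht0, fun k => ?_⟩
      rcases lt_trichotomy 0 (c k) with hck | hck | hck
      · -- 0 < c k : use membership of its ratio in S
        have hmem : (dotp (a k) x - b k) / c k ∈ S := by
          refine Finset.mem_insert_of_mem ?_
          exact Finset.mem_image_of_mem _ (Finset.mem_filter.2 ⟨Finset.mem_univ _, hck⟩)
        have := Finset.le_max' S _ hmem
        rw [div_le_iff₀ hck] at this
        linarith
      · -- c k = 0 : use inl constraint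
        have h1 := hx (Sum.inl k)
        have : dotp (if 0 < c k then 0 else a k) x ≤ if 0 < c k then 0 else b k := h1
        rw [if_neg (by rw [← hck]; exact lt_irrefl 0), if_neg (by rw [← hck]; exact lt_irrefl 0)] at this
        rw [← hck]
        linarith
      · -- c k < 0 : analyze the maximizer
        have hmax : t ∈ S := Finset.max'_mem S hSne
        rcases Finset.mem_insert.1 hmax with h0 | hmem
        · -- t = 0
          have h1 := hx (Sum.inl k)
          have : dotp (if 0 < c k then 0 else a k) x ≤ if 0 < c k then 0 else b k := h1
          rw [if_neg (asymm hck), if_neg (asymm hck)] at this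
          rw [h0]
          linarith
        · obtain ⟨j, hj, hjt⟩ := Finset.mem_image.1 hmem
          have hcj : 0 < c j := (Finset.mem_filter.1 hj).2
          have h2 := hx (Sum.inr (j, k))
          have : dotp (if 0 < c j ∧ c k < 0 then c j • a k - c k • a j else 0) x ≤
              if 0 < c j ∧ c k < 0 then c j * b k - c k * b j else 0 := h2
          rw [if_pos ⟨hcj, hck⟩, if_pos ⟨hcj, hck⟩, dotp_comb] at this
          -- t = (dotp (a j) x - b j) / c j
          have hgoal : dotp (a k) x - b k ≤ (dotp (a j) x - b j) * c k / c j := by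
            rw [le_div_iff₀ hcj]; nlinarith
          have heq : (dotp (a j) x - b j) / c j * c k = (dotp (a j) x - b j) * c k / c j :=
            div_mul_eq_mul_div _ _ _
          rw [← hjt, heq]
          linarith
  rw [key]
  exact isPolyhedron_fintype _ _

def coneGen {d : ℕ} {ι : Type*} [Fintype ι] (g : ι → Fin d → ℝ) : Set (Fin d → ℝ) :=
  {x | ∃ c : ι → ℝ, (∀ k, 0 ≤ c k) ∧ x = ∑ k, c k • g k}

lemma coneGen_reindex {d : ℕ} {ι ι' : Type*} [Fintype ι] [Fintype ι'] (e : ι' ≃ ι)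
    (g : ι → Fin d → ℝ) : coneGen g = coneGen (g ∘ e) := by
  ext x
  constructor
  · rintro ⟨c, hc, rfl⟩
    exact ⟨c ∘ e, fun k => hc _, by rw [← Equiv.sum_comp e (fun k => c k • g k)]; rfl⟩
  · rintro ⟨c, hc, rfl⟩
    refine ⟨c ∘ e.symm, fun k => hc _, ?_⟩
    rw [← Equiv.sum_comp e (fun k => (c ∘ e.symm) k • g k)]
    simp

lemma isPoly_add_coneGen {d : ℕ} : ∀ (m : ℕ) (g : Fin m → Fin d → ℝ)
    (P : Set (Fin d → ℝ)), IsPolyhedron P → IsPolyhedron (P + coneGen g) := by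
  intro m
  induction m with
  | zero =>
    intro g P hP
    have : P + coneGen g = P := by
      ext x
      constructor
      · rintro ⟨p, hp, q, ⟨c, hc, rfl⟩, rfl⟩
        simpa using hp
      · intro hx
        exact ⟨x, hx, 0, ⟨0, fun k => le_refl _, by simp⟩, add_zero x⟩
    rwa [this]
  | succ m ih =>
    intro g P hP
    have hdecomp : coneGen g = coneGen (g ∘ Fin.castSucc) +
        {x : Fin d → ℝ | ∃ t : ℝ, 0 ≤ t ∧ x = t • g (Fin.last m)} := by
      ext x
      constructor
      · rintro ⟨c, hc, rfl⟩
        refine ⟨∑ k : Fin m, c k.castSucc • g k.castSucc, ⟨fun k => c k.castSucc,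
          fun k => hc _, rfl⟩, c (Fin.last m) • g (Fin.last m),
          ⟨c (Fin.last m), hc _, rfl⟩, ?_⟩
        rw [Fin.sum_univ_castSucc]
      · rintro ⟨p, ⟨c, hc, rfl⟩, q, ⟨t, ht, rfl⟩, rfl⟩
        refine ⟨Fin.snoc c t, fun k => ?_, ?_⟩
        · refine Fin.lastCases ?_ ?_ k
          · simp [ht]
          · intro i; simp [hc i]
        · rw [Fin.sum_univ_castSucc]
          simp
    rw [hdecomp, ← add_assoc]
    exact isPoly_add_ray (ih (g ∘ Fin.castSucc) P hP) _

lemma solvencyCone_eq_coneGen {d : ℕ} (π : Fin d → Fin d → ℝ) :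
    solvencyCone π = coneGen (Sum.elim (fun i => eVec i)
      (fun p : Fin d × Fin d => π p.1 p.2 • eVec p.1 - eVec p.2)) := by
  ext x
  constructor
  · rintro ⟨a, b, ha, hb, rfl⟩
    refine ⟨Sum.elim a (fun p => b p.1 p.2), ?_, ?_⟩
    · rintro (i | ⟨i, j⟩)
      · exact ha i
      · exact hb i j
    · rw [Fintype.sum_sum_type]
      simp only [Sum.elim_inl, Sum.elim_inr]
      rw [Fintype.sum_prod_type]
  · rintro ⟨c, hc, rfl⟩
    refine ⟨fun i => c (Sum.inl i), fun i j => c (Sum.inr (i, j)),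
      fun i => hc _, fun i j => hc _, ?_⟩
    rw [Fintype.sum_sum_type]
    simp only [Sum.elim_inl, Sum.elim_inr]
    rw [Fintype.sum_prod_type]

lemma isPoly_add_solvencyCone {d : ℕ} {P : Set (Fin d → ℝ)} (hP : IsPolyhedron P)
    (π : Fin d → Fin d → ℝ) : IsPolyhedron (P + solvencyCone π) := by
  rw [solvencyCone_eq_coneGen]
  set G := Sum.elim (fun i => (eVec i : Fin d → ℝ))
    (fun p : Fin d × Fin d => π p.1 p.2 • eVec p.1 - eVec p.2)
  rw [coneGen_reindex (Fintype.equivFin (Fin d ⊕ Fin d × Fin d)).symm G]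
  exact isPoly_add_coneGen _ _ P hP

lemma sum_smul_eVec {d : ℕ} (x : Fin d → ℝ) : ∑ i, x i • eVec i = x := by
  funext j
  simp [eVec, Finset.sum_apply, Pi.single_apply, Finset.sum_ite_eq]

lemma orthant_subset_solvencyCone {d : ℕ} (π : Fin d → Fin d → ℝ) {x : Fin d → ℝ}
    (hx : ∀ i, 0 ≤ x i) : x ∈ solvencyCone π := by
  exact ⟨x, 0, hx, fun i j => le_refl _, by simp [sum_smul_eVec]⟩

lemma zero_mem_solvencyCone {d : ℕ} (π : Fin d → Fin d → ℝ) : (0 : Fin d → ℝ) ∈ solvencyCone π :=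
  orthant_subset_solvencyCone π (fun i => le_refl _)

lemma shift_cone_eq {d : ℕ} (π : Fin d → Fin d → ℝ) (x : Fin d → ℝ) :
    {v : Fin d → ℝ | v - x ∈ solvencyCone π} = {x} + solvencyCone π := by
  ext v
  constructor
  · intro hv
    exact ⟨x, rfl, v - x, hv, add_sub_cancel x v⟩
  · rintro ⟨p, rfl, q, hq, rfl⟩
    simpa using hq

lemma isPolyhedron_shift_cone {d : ℕ} (π : Fin d → Fin d → ℝ) (x : Fin d → ℝ) :
    IsPolyhedron {v : Fin d → ℝ | v - x ∈ solvencyCone π} := by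
  rw [shift_cone_eq]
  exact isPoly_add_solvencyCone (isPolyhedron_singleton x) π

lemma mem_shift_cone_of_le {d : ℕ} (π : Fin d → Fin d → ℝ) {x v : Fin d → ℝ}
    (h : ∀ i, x i ≤ v i) : v ∈ {w : Fin d → ℝ | w - x ∈ solvencyCone π} :=
  orthant_subset_solvencyCone π (fun i => by simpa using h i)

def FUP {d : ℕ} (A : Set (Fin d → ℝ)) : Prop :=
  ∃ (n : ℕ) (Q : Fin n → Set (Fin d → ℝ)), (∀ k, IsPolyhedron (Q k)) ∧ A = ⋃ k, Q k

lemma FUP_of_fintype {d : ℕ} {κ : Type*} [Fintype κ] (Q : κ → Set (Fin d → ℝ))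
    (h : ∀ k, IsPolyhedron (Q k)) : FUP (⋃ k, Q k) := by
  let e := Fintype.equivFin κ
  refine ⟨Fintype.card κ, Q ∘ e.symm, fun k => h _, ?_⟩
  ext x
  simp only [Set.mem_iUnion, Function.comp_apply]
  exact ⟨fun ⟨k, hk⟩ => ⟨e k, by simpa using hk⟩, fun ⟨k, hk⟩ => ⟨e.symm k, hk⟩⟩

lemma IsPolyhedron.fup {d : ℕ} {A : Set (Fin d → ℝ)} (h : IsPolyhedron A) : FUP A :=
  ⟨1, fun _ => A, fun _ => h, (Set.iUnion_const A).symm⟩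

lemma FUP.union {d : ℕ} {A B : Set (Fin d → ℝ)} (hA : FUP A) (hB : FUP B) :
    FUP (A ∪ B) := by
  obtain ⟨n, Q, hQ, rfl⟩ := hA
  obtain ⟨m, R, hR, rfl⟩ := hB
  have : (⋃ k, Q k) ∪ (⋃ k, R k) = ⋃ k : Fin n ⊕ Fin m, Sum.elim Q R k := by
    ext x
    simp only [Set.mem_union, Set.mem_iUnion, Sum.exists, Sum.elim_inl, Sum.elim_inr]
  rw [this]
  exact FUP_of_fintype _ (by rintro (k | k) <;> simp [hQ, hR])

lemma FUP.inter {d : ℕ} {A B : Set (Fin d → ℝ)} (hA : FUP A) (hB : FUP B) :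
    FUP (A ∩ B) := by
  obtain ⟨n, Q, hQ, rfl⟩ := hA
  obtain ⟨m, R, hR, rfl⟩ := hB
  have : (⋃ k, Q k) ∩ (⋃ k, R k) = ⋃ p : Fin n × Fin m, Q p.1 ∩ R p.2 := by
    ext x
    simp only [Set.mem_inter_iff, Set.mem_iUnion, Prod.exists]
    tauto
  rw [this]
  refine FUP_of_fintype _ fun p => ?_
  have : Q p.1 ∩ R p.2 = ⋂ i : Bool, if i then Q p.1 else R p.2 := by
    ext x; simp [Set.mem_iInter, Bool.forall_bool]; tauto
  rw [this]
  exact isPolyhedron_iInter (by rintro (_|_) <;> simp [hQ, hR])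

lemma FUP_iInter {d : ℕ} {ι : Type*} [Fintype ι] {A : ι → Set (Fin d → ℝ)}
    (h : ∀ i, FUP (A i)) : FUP (⋂ i, A i) := by
  classical
  choose n Q hQ hA using h
  have : (⋂ i, A i) = ⋃ f : (∀ i, Fin (n i)), ⋂ i, Q i (f i) := by
    ext x
    simp only [Set.mem_iInter, Set.mem_iUnion]
    constructor
    · intro hx
      have : ∀ i, ∃ k, x ∈ Q i k := by
        intro i
        have := hx i
        rw [hA i] at this
        simpa using this
      choose f hf using this
      exact ⟨f, hf⟩
    · rintro ⟨f, hf⟩ i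
      rw [hA i]
      exact Set.mem_iUnion.2 ⟨f i, hf i⟩
  rw [this]
  exact FUP_of_fintype _ fun f => isPolyhedron_iInter fun i => hQ i (f i)

open Pointwise in
lemma FUP.add_cone {d : ℕ} {A : Set (Fin d → ℝ)} (hA : FUP A) (π : Fin d → Fin d → ℝ) :
    FUP (A + solvencyCone π) := by
  obtain ⟨n, Q, hQ, rfl⟩ := hA
  rw [Set.iUnion_add]
  exact FUP_of_fintype _ fun k => isPoly_add_solvencyCone (hQ k) π

lemma FUP.isClosed {d : ℕ} {A : Set (Fin d → ℝ)} (hA : FUP A) : IsClosed A := by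
  obtain ⟨n, Q, hQ, rfl⟩ := hA
  exact isClosed_iUnion_of_finite fun k => (hQ k).isClosed

lemma FUP.toFinUnionPoly {d : ℕ} {A : Set (Fin d → ℝ)} (hA : FUP A) (hne : A.Nonempty) :
    FinUnionPoly A := by
  classical
  obtain ⟨n, Q, hQ, rfl⟩ := hA
  set s : Finset (Fin n) := Finset.univ.filter (fun k => (Q k).Nonempty) with hs
  have hcard : ∀ k : Fin s.card, (s.orderIsoOfFin rfl k : Fin n) ∈ s := fun k =>
    (s.orderIsoOfFin rfl k).2
  refine ⟨s.card, fun k => Q (s.orderIsoOfFin rfl k), fun k => ?_, ?_⟩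
  · exact ⟨hQ _, (Finset.mem_filter.1 (hcard k)).2⟩
  · ext x
    simp only [Set.mem_iUnion]
    constructor
    · rintro ⟨k, hk⟩
      have hks : k ∈ s := by rw [hs, Finset.mem_filter]; exact ⟨Finset.mem_univ _, ⟨x, hk⟩⟩
      refine ⟨(s.orderIsoOfFin rfl).symm ⟨k, hks⟩, ?_⟩
      simpa using hk
    · rintro ⟨k, hk⟩
      exact ⟨_, hk⟩


section MainAux

variable {Ω' : Type*} [Fintype Ω'] {d' T' : ℕ}

lemma Za_eq_of_ge (M : Market Ω' d' T') (Y X X' : ℕ → Ω' → Fin d' → ℝ) {t : ℕ} (ω : Ω')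
    (h : T' ≤ t) : Za M Y X X' t ω = {v | v - X' T' ω ∈ M.cone T' ω} := by
  rw [Za, if_pos h]

lemma Za_eq_of_lt (M : Market Ω' d' T') (Y X X' : ℕ → Ω' → Fin d' → ℝ) {t : ℕ} (ω : Ω')
    (h : t < T') : Za M Y X X' t ω =
      ((WaSet M Y X X' t ω + M.cone t ω) ∩ {v | v - Y t ω ∈ M.cone t ω})
        ∪ {v | v - X t ω ∈ M.cone t ω} := by
  rw [Za, if_neg (not_le.2 h), WaSet, if_neg (not_le.2 h)]

lemma mem_Za_of_ge (M : Market Ω' d' T') (Y X X' : ℕ → Ω' → Fin d' → ℝ) {t : ℕ} (ω : Ω')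
    {v : Fin d' → ℝ} (hv : ∀ i, (if T' ≤ t then X' T' ω else X t ω) i ≤ v i) :
    v ∈ Za M Y X X' t ω := by
  rcases le_or_gt T' t with h | h
  · rw [Za_eq_of_ge M Y X X' ω h]
    exact mem_shift_cone_of_le _ (by simpa [if_pos h] using hv)
  · rw [Za_eq_of_lt M Y X X' ω h]
    exact Or.inr (mem_shift_cone_of_le _ (by simpa [if_neg (not_le.2 h)] using hv))

end MainAux

/-- For every `t = 0,…,T` and every `ω` (representing an atom `μ` of `F_t`), the sets
`Z^{aμ}_t`, `V^{aμ}_t` and `W^{aμ}_t` of the seller's backward construction are finite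
unions of nonempty closed polyhedra, and in particular are closed subsets of `ℝ^d`. -/
theorem Za_Va_Wa_finUnionPoly_closed {Ω : Type*} [Fintype Ω] {d T : ℕ}
    (M : Market Ω d T) (Y X X' : ℕ → Ω → Fin d → ℝ) (hGO : IsGameOption M Y X X') :
    ∀ t, t ≤ T → ∀ ω,
      (FinUnionPoly (Za M Y X X' t ω) ∧ IsClosed (Za M Y X X' t ω)) ∧
      (FinUnionPoly (VaSet M Y X X' t ω) ∧ IsClosed (VaSet M Y X X' t ω)) ∧
      (FinUnionPoly (WaSet M Y X X' t ω) ∧ IsClosed (WaSet M Y X X' t ω)) := by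
  classical
  have base : ∀ t, T ≤ t → ∀ ω,
      (FUP (Za M Y X X' t ω) ∧ (Za M Y X X' t ω).Nonempty) ∧
      (FUP (VaSet M Y X X' t ω) ∧ (VaSet M Y X X' t ω).Nonempty) ∧
      (FUP (WaSet M Y X X' t ω) ∧ (WaSet M Y X X' t ω).Nonempty) := by
    intro t hTt ω
    refine ⟨⟨?_, ?_⟩, ⟨?_, ?_⟩, ⟨?_, ?_⟩⟩
    · rw [Za_eq_of_ge M Y X X' ω hTt]
      exact (isPolyhedron_shift_cone _ _).fup
    · rw [Za_eq_of_ge M Y X X' ω hTt]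
      exact ⟨X' T ω, by simp only [Set.mem_setOf_eq, sub_self]; exact zero_mem_solvencyCone _⟩
    · rw [VaSet, if_pos hTt]; exact isPolyhedron_univ.fup
    · rw [VaSet, if_pos hTt]; exact ⟨0, trivial⟩
    · rw [WaSet, if_pos hTt]; exact isPolyhedron_univ.fup
    · rw [WaSet, if_pos hTt]; exact ⟨0, trivial⟩
  have key : ∀ n t, T - t ≤ n → t ≤ T → ∀ ω,
      (FUP (Za M Y X X' t ω) ∧ (Za M Y X X' t ω).Nonempty) ∧
      (FUP (VaSet M Y X X' t ω) ∧ (VaSet M Y X X' t ω).Nonempty) ∧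
      (FUP (WaSet M Y X X' t ω) ∧ (WaSet M Y X X' t ω).Nonempty) := by
    intro n
    induction n with
    | zero =>
      intro t hn htT ω
      exact base t (by omega) ω
    | succ n ih =>
      intro t hn htT ω
      rcases le_or_gt T t with hTt | hTt
      · exact base t hTt ω
      · -- t < T
        have ht1 : t + 1 ≤ T := hTt
        have hn1 : T - (t + 1) ≤ n := by omega
        -- W
        have hWeq : WaSet M Y X X' t ω =
            ⋂ ω' : Ω, (if ω' ∈ atomOf (M.F t) ω then Za M Y X X' (t + 1) ω' else Set.univ) := by
          rw [WaSet, if_neg (not_le.2 hTt)]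
          ext v
          simp only [Set.mem_setOf_eq, Set.mem_iInter]
          constructor
          · intro hv ω'
            split_ifs with h
            · exact hv ω' h
            · trivial
          · intro hv ω' hω'
            have := hv ω'
            rwa [if_pos hω'] at this
        have hWfup : FUP (WaSet M Y X X' t ω) := by
          rw [hWeq]
          refine FUP_iInter fun ω' => ?_
          split_ifs with h
          · exact (ih (t + 1) hn1 ht1 ω').1.1
          · exact isPolyhedron_univ.fup
        have hWne : (WaSet M Y X X' t ω).Nonempty := by
          set g : Ω → Fin d → ℝ := fun ω' => if T ≤ t + 1 then X' T ω' else X (t + 1) ω'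
            with hg
          set v : Fin d → ℝ :=
            fun i => Finset.univ.sup' ⟨ω, Finset.mem_univ ω⟩ (fun ω' => g ω' i) with hv
          refine ⟨v, ?_⟩
          rw [WaSet, if_neg (not_le.2 hTt)]
          intro ω' _
          refine mem_Za_of_ge M Y X X' ω' fun i => ?_
          exact Finset.le_sup' (fun ω'' => g ω'' i) (Finset.mem_univ ω')
        -- V
        have hVeq : VaSet M Y X X' t ω = WaSet M Y X X' t ω + M.cone t ω := by
          rw [VaSet, if_neg (not_le.2 hTt)]
        have hVfup : FUP (VaSet M Y X X' t ω) := by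
          rw [hVeq]; exact hWfup.add_cone _
        have hVne : (VaSet M Y X X' t ω).Nonempty := by
          obtain ⟨w, hw⟩ := hWne
          rw [hVeq]
          exact ⟨w + 0, Set.add_mem_add hw (zero_mem_solvencyCone _)⟩
        -- Z
        have hZfup : FUP (Za M Y X X' t ω) := by
          rw [Za_eq_of_lt M Y X X' ω hTt, ← hVeq]
          exact (hVfup.inter (isPolyhedron_shift_cone _ _).fup).union
            (isPolyhedron_shift_cone _ _).fup
        have hZne : (Za M Y X X' t ω).Nonempty :=
          ⟨X t ω, mem_Za_of_ge M Y X X' ω fun i => by rw [if_neg (not_le.2 hTt)]⟩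
        exact ⟨⟨hZfup, hZne⟩, ⟨hVfup, hVne⟩, ⟨hWfup, hWne⟩⟩
  intro t htT ω
  obtain ⟨⟨hZf, hZn⟩, ⟨hVf, hVn⟩, ⟨hWf, hWn⟩⟩ := key (T - t) t le_rfl htT ω
  exact ⟨⟨hZf.toFinUnionPoly hZn, hZf.isClosed⟩, ⟨hVf.toFinUnionPoly hVn, hVf.isClosed⟩,
    ⟨hWf.toFinUnionPoly hWn, hWf.isClosed⟩⟩
end
end
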